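/- Let G be a finite group, N a nontrivial abelian normal subgroup over which G is unramified, and M ⊋ N an abelian normal subgroup of G. Then G is unramified over M if and only if G/N is unramified over M/N. -/

import Mathlib

open scoped BigOperators

noncomputable def charInner (G : Type) [Group G] (φ ψ : G → ℂ) : ℂ :=
  (Nat.card G : ℂ)⁻¹ * ∑ᶠ g, φ g * (starRingEnd ℂ) (ψ g)

/-- `χ` is the character of some irreducible complex representation of `G`. -/
def IsIrrChar (G : Type) [Group G] (χ : G → ℂ) : Prop :=
  ∃ ρ : FDRep ℂ G, CategoryTheory.Simple ρ ∧ FDRep.character ρ = χ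

/-- A class function is multiplicity free if it pairs with each irreducible
character with multiplicity at most one. -/
def MultFree (G : Type) [Group G] (φ : G → ℂ) : Prop :=
  ∀ μ : G → ℂ, IsIrrChar G μ → charInner G φ μ = 0 ∨ charInner G φ μ = 1

/-- `G` is unramified over `N`: every irreducible character of `G` restricts to `N`
multiplicity-freely or as a multiple of the trivial character. -/
def UnramifiedOver (G : Type) [Group G] (N : Subgroup G) : Prop :=
  ∀ χ : G → ℂ, IsIrrChar G χ →
    MultFree N (fun n : N => χ n) ∨ ∀ n : N, χ n = χ 1

def PseudoUnramifiedOver (G : Type) [Group G] (N : Subgroup G) : Prop :=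
  ∀ μ : ↥N → ℂ, IsIrrChar ↥N μ →
    ∃ χ : G → ℂ, IsIrrChar G χ ∧ charInner ↥N (fun n : N => χ n) μ ≠ 0 ∧
      MultFree ↥N (fun n : N => χ n)

/-- The conjugate character `ᵍμ(n) = μ(g⁻¹ n g)`. -/
def conjChar {G : Type} [Group G] (N : Subgroup G) [hN : N.Normal] (g : G)
    (μ : ↥N → ℂ) : ↥N → ℂ :=
  fun n => μ ⟨g⁻¹ * ↑n * g, hN.conj_mem' ↑n n.2 g⟩

lemma conjChar_mul {G : Type} [Group G] (N : Subgroup G) [N.Normal] (a b : G)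
    (μ : ↥N → ℂ) : conjChar N (a * b) μ = conjChar N a (conjChar N b μ) := by
  funext n
  simp [conjChar, mul_assoc]

lemma conjChar_one {G : Type} [Group G] (N : Subgroup G) [N.Normal]
    (μ : ↥N → ℂ) : conjChar N 1 μ = μ := by
  funext n
  simp [conjChar]

/-- The inertia subgroup of μ. -/
def inertia {G : Type} [Group G] (N : Subgroup G) [N.Normal] (μ : ↥N → ℂ) :
    Subgroup G where
  carrier := {g | conjChar N g μ = μ}
  one_mem' := conjChar_one N μ
  mul_mem' := by
    intro a b ha hb
    simp only [Set.mem_setOf_eq] at *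
    rw [conjChar_mul, hb, ha]
  inv_mem' := by
    intro a ha
    simp only [Set.mem_setOf_eq] at *
    conv_lhs => rw [← ha]
    rw [← conjChar_mul, inv_mul_cancel, conjChar_one]

/-!
Characters of the abelian group `M` are linear, and for a linear character `μ` the inner
product `⟨χ|_M, μ⟩` is the dimension of the `M`-invariants of `Hom(μ, χ)`, which can only grow
on restriction to `N`; so if `χ|_N` is multiplicity free, so is `χ|_M`. Otherwise `χ|_N` is a
multiple of the trivial character, so `χ` is inflated from `G/N`. A linear character of `M`
trivial on `N` descends to `M/N` with the same inner product against `χ`, while one that is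
nontrivial on `N` is orthogonal to `χ|_M`, because `χ` is invariant under translation by `N`.
The converse is inflation along `G → G/N`. Irreducibility is tested throughout by the
criterion `∑ χ(g) χ(g⁻¹) = |G|`, which is visibly invariant under inflation.
-/

open CategoryTheory Representation Module

theorem MonoidHom.card_inv_mul_sum_comp_of_surjective {A B : Type*} [Group A] [Group B]
    [Fintype A] [Fintype B] (f : A →* B) (hf : Function.Surjective f) (φ : B → ℂ) :
    (Nat.card A : ℂ)⁻¹ * ∑ a, φ (f a) = (Nat.card B : ℂ)⁻¹ * ∑ b, φ b := by
  classical
  let e : A ≃ B × f.ker := Subgroup.groupEquivQuotientProdSubgroup.trans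
    ((QuotientGroup.quotientKerEquivOfSurjective f hf).toEquiv.prodCongr (Equiv.refl _))
  have hker : (Nat.card f.ker : ℂ) ≠ 0 := Nat.cast_ne_zero.mpr Nat.card_pos.ne'
  rw [Fintype.sum_equiv e (fun a => φ (f a)) (fun p => φ p.1) (fun a => rfl),
    Fintype.sum_prod_type, Nat.card_congr e, Nat.card_prod]
  simp only [Finset.sum_const, Finset.card_univ, nsmul_eq_mul, ← Finset.mul_sum,
    Fintype.card_eq_nat_card]
  push_cast
  field_simp

lemma charInner_eq_card_inv_mul_sum {H : Type} [Group H] [Fintype H] (φ ψ : H → ℂ) :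
    charInner H φ ψ = (Nat.card H : ℂ)⁻¹ * ∑ g, φ g * starRingEnd ℂ (ψ g) := by
  rw [charInner, finsum_eq_sum_of_fintype]

lemma charInner_comp_of_surjective {A B : Type} [Group A] [Group B] [Finite A] (f : A →* B)
    (hf : Function.Surjective f) (φ ψ : B → ℂ) :
    charInner A (fun a => φ (f a)) (fun a => ψ (f a)) = charInner B φ ψ := by
  have := Finite.of_surjective f hf
  have := Fintype.ofFinite A
  have := Fintype.ofFinite B
  simp only [charInner_eq_card_inv_mul_sum]
  exact f.card_inv_mul_sum_comp_of_surjective hf fun b => φ b * starRingEnd ℂ (ψ b)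

lemma charInner_eq_zero_of_mul_right {H : Type} [Group H] [Finite H] {φ ψ : H → ℂ} (n : H)
    (hφ : ∀ g, φ (g * n) = φ g) (hψ : ∀ g, ψ (g * n) = ψ g * ψ n) (hn : ψ n ≠ 1) :
    charInner H φ ψ = 0 := by
  have := Fintype.ofFinite H
  rw [charInner_eq_card_inv_mul_sum, mul_eq_zero_iff_left (inv_ne_zero ?_)]
  · set S := ∑ g, φ g * starRingEnd ℂ (ψ g)
    have hS : S = starRingEnd ℂ (ψ n) * S := by
      calc S = ∑ g, φ (g * n) * starRingEnd ℂ (ψ (g * n)) :=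
            (Fintype.sum_equiv (Equiv.mulRight n) _ _ fun g => rfl).symm
        _ = starRingEnd ℂ (ψ n) * S := by
            simp only [S, Finset.mul_sum, hφ, hψ, map_mul]
            exact Finset.sum_congr rfl fun g _ => by ring
    have hn' : starRingEnd ℂ (ψ n) ≠ 1 := by
      rwa [Ne, map_eq_one_iff _ (RingHom.injective _)]
    by_contra h
    exact hn' ((mul_eq_right₀ h).mp hS.symm)
  · exact Nat.cast_ne_zero.mpr Nat.card_pos.ne'

namespace Representation

variable {H V W : Type} [Group H] [AddCommGroup V] [AddCommGroup W]

section Field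

variable {k : Type} [Field k] [Module k V] [Module k W]

lemma character_mul_of_finrank_eq_one (ρ : Representation k H V) (hV : finrank k V = 1)
    (g g' : H) : ρ.character (g * g') = ρ.character g * ρ.character g' := by
  have := Module.finite_of_finrank_eq_succ hV
  obtain ⟨c, hc, -⟩ := LinearMap.existsUnique_eq_smul_id_of_finrank_eq_one hV (ρ g)
  simp [character, hc, ← Module.End.one_eq_id, hV]

lemma linHom_comp {A B : Type} [Group A] [Group B] (f : A →* B) (σ : Representation k B W)
    (ρ : Representation k B V) : linHom (σ.comp f) (ρ.comp f) = (linHom σ ρ).comp f := by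
  ext a φ
  simp [linHom_apply]

lemma finrank_invariants_le_comp {A B : Type} [Group A] [Group B] [FiniteDimensional k V]
    (f : A →* B) (ρ : Representation k B V) :
    finrank k (invariants ρ) ≤ finrank k (invariants (ρ.comp f)) :=
  Submodule.finrank_mono fun _ hv a => hv (f a)

lemma exists_comp_eq_of_ker_le {A B : Type} [Group A] [Group B] {f : A →* B}
    (hf : Function.Surjective f) (ρ : Representation k A V) (h : f.ker ≤ ρ.ker) :
    ∃ σ : Representation k B V, σ.comp f = ρ := by
  refine ⟨(Units.coeHom _).comp (f.liftOfSurjective hf ⟨ρ.toHomUnits, fun a ha => ?_⟩),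
    MonoidHom.ext fun a => ?_⟩
  · exact Units.ext (h ha)
  · simp

end Field

variable [Module ℂ V] [Module ℂ W]

lemma star_character_of_finrank_eq_one [Finite H] (ρ : Representation ℂ H V)
    (hV : finrank ℂ V = 1) (g : H) : starRingEnd ℂ (ρ.character g) = ρ.character g⁻¹ := by
  have := Module.finite_of_finrank_eq_succ hV
  let χ : H →* ℂ := ⟨⟨ρ.character, by simp [hV]⟩, ρ.character_mul_of_finrank_eq_one hV⟩
  have hpow : χ g ^ orderOf g = 1 := by rw [← map_pow, pow_orderOf_eq_one, map_one]
  have hinv : χ g * χ g⁻¹ = 1 := by rw [← map_mul, mul_inv_cancel, map_one]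
  change starRingEnd ℂ (χ g) = χ g⁻¹
  rw [← Complex.inv_eq_conj (Complex.norm_eq_one_of_pow_eq_one hpow (orderOf_pos g).ne')]
  exact inv_eq_of_mul_eq_one_right hinv

lemma eq_one_of_character_eq_finrank [Finite H] [FiniteDimensional ℂ V]
    (ρ : Representation ℂ H V) (h : ∀ g, ρ.character g = finrank ℂ V) (g : H) : ρ g = 1 := by
  have := Fintype.ofFinite H
  have := invertibleOfNonzero (Nat.cast_ne_zero.mpr Nat.card_pos.ne' : (Nat.card H : ℂ) ≠ 0)
  have hfin := card_inv_mul_sum_char_eq_finrank ρ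
  simp only [h, Finset.sum_const, Finset.card_univ, nsmul_eq_mul, Fintype.card_eq_nat_card,
    inv_mul_cancel_left₀ (NeZero.ne (Nat.card H : ℂ))] at hfin
  have htop : invariants ρ = ⊤ := Submodule.eq_top_of_finrank_eq (by exact_mod_cast hfin.symm)
  exact LinearMap.ext fun v => (htop ▸ Submodule.mem_top : v ∈ invariants ρ) g

lemma charInner_character_eq_finrank_invariants [Finite H] [FiniteDimensional ℂ V]
    (ρ : Representation ℂ H V) (σ : Representation ℂ H W) (hW : finrank ℂ W = 1) :
    charInner H ρ.character σ.character = finrank ℂ (invariants (linHom σ ρ)) := by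
  have := Fintype.ofFinite H
  have := Module.finite_of_finrank_eq_succ hW
  have := invertibleOfNonzero (Nat.cast_ne_zero.mpr Nat.card_pos.ne' : (Nat.card H : ℂ) ≠ 0)
  rw [charInner_eq_card_inv_mul_sum, ← card_inv_mul_sum_char_eq_finrank]
  simp only [char_linHom, star_character_of_finrank_eq_one σ hW, mul_comm]

end Representation

namespace FDRep

variable {H : Type} [Group H]

lemma simple_iff_card_inv_mul_sum [Fintype H] (V : FDRep ℂ H) :
    Simple V ↔ (Nat.card H : ℂ)⁻¹ * ∑ g, V.character g * V.character g⁻¹ = 1 := by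
  have hH : (Nat.card H : ℂ) ≠ 0 := Nat.cast_ne_zero.mpr Nat.card_pos.ne'
  rw [simple_iff_char_is_norm_one, inv_mul_eq_one₀ hH, eq_comm]

lemma simple_iff_of_character_comp {A B : Type} [Group A] [Group B] [Finite A] {f : A →* B}
    (hf : Function.Surjective f) {V : FDRep ℂ A} {W : FDRep ℂ B}
    (h : ∀ a, V.character a = W.character (f a)) : Simple V ↔ Simple W := by
  have := Finite.of_surjective f hf
  have := Fintype.ofFinite A
  have := Fintype.ofFinite B
  rw [simple_iff_card_inv_mul_sum, simple_iff_card_inv_mul_sum,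
    ← f.card_inv_mul_sum_comp_of_surjective hf]
  simp only [h, map_inv]

lemma exists_eq_smul_id_of_commute (V : FDRep ℂ H) [Simple V] {g : H}
    (hg : ∀ h, g * h = h * g) : ∃ c : ℂ, V.ρ g = c • LinearMap.id := by
  let φ : V ⟶ V :=
    ⟨FGModuleCat.ofHom (V.ρ g), fun h => FGModuleCat.hom_ext <| LinearMap.ext fun v => by
      change V.ρ g (V.ρ h v) = V.ρ h (V.ρ g v)
      rw [← Module.End.mul_apply, ← map_mul, hg, map_mul, Module.End.mul_apply]⟩
  obtain ⟨c, hc⟩ := endomorphism_simple_eq_smul_id ℂ φ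
  refine ⟨c, LinearMap.ext fun v => ?_⟩
  exact (congrArg (fun u : V ⟶ V => u.hom v) hc).symm.trans rfl

lemma finrank_eq_one_of_simple [Finite H] [IsMulCommutative H] (V : FDRep ℂ H) [Simple V] :
    finrank ℂ V = 1 := by
  have := Fintype.ofFinite H
  have hsq : ∀ g : H, V.character g * V.character g⁻¹ = (finrank ℂ V : ℂ) ^ 2 := by
    intro g
    obtain ⟨c, hc⟩ := exists_eq_smul_id_of_commute V (g := g) fun h => mul_comm' g h
    obtain ⟨c', hc'⟩ := exists_eq_smul_id_of_commute V (g := g⁻¹) fun h => mul_comm' g⁻¹ h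
    have hcc' : c * c' * finrank ℂ V = finrank ℂ V := by
      have := congrArg (LinearMap.trace ℂ V) (map_mul V.ρ g g⁻¹)
      rw [mul_inv_cancel, map_one, hc, hc', smul_mul_smul_comm, ← Module.End.one_eq_id,
        mul_one, map_smul, LinearMap.trace_one, smul_eq_mul] at this
      exact this.symm
    simp only [character, hc, hc', map_smul, LinearMap.trace_id, smul_eq_mul]
    linear_combination (finrank ℂ V : ℂ) * hcc'
  have h := (simple_iff_card_inv_mul_sum V).mp inferInstance
  simp only [hsq, Finset.sum_const, Finset.card_univ, nsmul_eq_mul, Fintype.card_eq_nat_card,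
    ← mul_assoc, inv_mul_cancel₀ (Nat.cast_ne_zero.mpr Nat.card_pos.ne' : (Nat.card H : ℂ) ≠ 0),
    one_mul] at h
  have h' : finrank ℂ V ^ 2 = 1 := by exact_mod_cast h
  simpa using h'

lemma simple_of_finrank_eq_one [Finite H] (V : FDRep ℂ H) (hV : finrank ℂ V = 1) :
    Simple V := by
  have := Fintype.ofFinite H
  rw [simple_iff_card_inv_mul_sum]
  have h1 : ∀ g : H, V.character g * V.character g⁻¹ = 1 := fun g => by
    change Representation.character V.ρ g * Representation.character V.ρ g⁻¹ = 1
    rw [← Representation.character_mul_of_finrank_eq_one V.ρ hV, mul_inv_cancel,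
      Representation.char_one, hV, Nat.cast_one]
  simp [h1]

end FDRep

section Inflation

variable {A B : Type} [Group A] [Group B] [Finite A] {f : A →* B}

lemma IsIrrChar.comp (hf : Function.Surjective f) {χ : B → ℂ} (hχ : IsIrrChar B χ) :
    IsIrrChar A (fun a => χ (f a)) := by
  obtain ⟨W, hW, rfl⟩ := hχ
  exact ⟨FDRep.of (W.ρ.comp f), (FDRep.simple_iff_of_character_comp hf fun a => rfl).mpr hW, rfl⟩

lemma IsIrrChar.exists_comp_eq (hf : Function.Surjective f) {χ : A → ℂ} (hχ : IsIrrChar A χ)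
    (hker : ∀ a, f a = 1 → χ a = χ 1) : ∃ χ' : B → ℂ, IsIrrChar B χ' ∧ ∀ a, χ' (f a) = χ a := by
  obtain ⟨V, hV, rfl⟩ := hχ
  have htriv : f.ker ≤ V.ρ.ker := fun a ha =>
    Representation.eq_one_of_character_eq_finrank (V.ρ.comp f.ker.subtype)
      (fun k => (hker k k.2).trans (FDRep.char_one V)) ⟨a, ha⟩
  obtain ⟨σ, hσ⟩ := exists_comp_eq_of_ker_le hf V.ρ htriv
  have hV' : ∀ a, V.character a = (FDRep.of σ).character (f a) := fun a => by
    change LinearMap.trace ℂ V (V.ρ a) = LinearMap.trace ℂ V (σ (f a))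
    rw [← hσ, MonoidHom.comp_apply]
  exact ⟨_, ⟨_, (FDRep.simple_iff_of_character_comp hf hV').mp hV, rfl⟩, fun a => (hV' a).symm⟩

lemma MultFree.of_comp (hf : Function.Surjective f) {φ : B → ℂ}
    (h : MultFree A (fun a => φ (f a))) : MultFree B φ := fun μ hμ => by
  rw [← charInner_comp_of_surjective f hf]
  exact h _ (hμ.comp hf)

lemma MultFree.comp [IsMulCommutative A] (hf : Function.Surjective f) {φ : B → ℂ}
    (h : MultFree B φ) : MultFree A (fun a => φ (f a)) := by
  intro μ hμ
  by_cases hker : ∀ a, f a = 1 → μ a = μ 1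
  · obtain ⟨μ', hμ', hcomp⟩ := hμ.exists_comp_eq hf hker
    rw [← funext hcomp, charInner_comp_of_surjective f hf]
    exact h μ' hμ'
  · push Not at hker
    obtain ⟨n, hn, hμn⟩ := hker
    obtain ⟨Y, hY, rfl⟩ := hμ
    have hY1 := FDRep.finrank_eq_one_of_simple Y
    refine Or.inl (charInner_eq_zero_of_mul_right n (fun a => by simp [hn])
      (Representation.character_mul_of_finrank_eq_one Y.ρ hY1 · n) ?_)
    rwa [FDRep.char_one, hY1, Nat.cast_one] at hμn

lemma multFree_character_of_comp [IsMulCommutative B] [Finite B] {V : Type} [AddCommGroup V]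
    [Module ℂ V] [FiniteDimensional ℂ V] (f : A →* B) (ρ : Representation ℂ B V)
    (h : MultFree A (character (ρ.comp f))) : MultFree B ρ.character := by
  rintro _ ⟨Y, hY, rfl⟩
  have hY1 := FDRep.finrank_eq_one_of_simple Y
  have hA := h _ ⟨FDRep.of (Y.ρ.comp f), FDRep.simple_of_finrank_eq_one _ hY1, rfl⟩
  have hinvA : charInner A (character (ρ.comp f)) (FDRep.of (Y.ρ.comp f)).character =
      finrank ℂ (invariants ((linHom Y.ρ ρ).comp f)) := by
    rw [← linHom_comp]
    exact charInner_character_eq_finrank_invariants _ (Y.ρ.comp f) hY1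
  have hinvB : charInner B ρ.character Y.character = finrank ℂ (invariants (linHom Y.ρ ρ)) :=
    charInner_character_eq_finrank_invariants _ _ hY1
  have hle := finrank_invariants_le_comp f (linHom Y.ρ ρ)
  rw [hinvA] at hA
  rw [hinvB]
  norm_cast at hA ⊢
  omega

end Inflation

theorem UnramifiedOver.map {G Q : Type} [Group G] [Group Q] [Finite G] {M : Subgroup G}
    (h : UnramifiedOver G M) {f : G →* Q} (hf : Function.Surjective f) :
    UnramifiedOver Q (M.map f) := by
  intro χ hχ
  rcases h _ (hχ.comp hf) with hmf | hconst
  · exact Or.inl (MultFree.of_comp (φ := fun q : M.map f => χ q)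
      (f.subgroupMap_surjective M) hmf)
  · right
    rintro ⟨_, m, hm, rfl⟩
    simpa using hconst ⟨m, hm⟩

theorem stmt_11_general {G : Type} [Group G] [Finite G] (N M : Subgroup G)
    [N.Normal] (habM : ∀ a b : ↥M, a * b = b * a) (hNM : N < M)
    (hunr : UnramifiedOver G N) :
    UnramifiedOver G M ↔
      UnramifiedOver (G ⧸ N) (M.map (QuotientGroup.mk' N)) := by
  have hπ := QuotientGroup.mk'_surjective N
  refine ⟨fun hM => hM.map hπ, fun hQ χ hχ => ?_⟩
  have := IsMulCommutative.of_comm habM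
  rcases hunr χ hχ with hmf | htriv
  · obtain ⟨X, -, rfl⟩ := hχ
    exact Or.inl
      (multFree_character_of_comp (Subgroup.inclusion hNM.le) (X.ρ.comp M.subtype) hmf)
  · obtain ⟨χ', hχ', hcomp⟩ :=
      hχ.exists_comp_eq hπ fun g hg => htriv ⟨g, (QuotientGroup.eq_one_iff g).mp hg⟩
    rcases hQ χ' hχ' with hmf | hconst
    · left
      simp only [← hcomp]
      exact hmf.comp (φ := fun q => χ' q) ((QuotientGroup.mk' N).subgroupMap_surjective M)
    · right
      intro m
      rw [← hcomp, ← hcomp, map_one]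
      exact hconst ⟨_, m, m.2, rfl⟩

/-- If G is unramified over N and N ⊊ M with M abelian normal, then G is
unramified over M iff G/N is unramified over M/N. -/
theorem stmt_11 {G : Type} [Group G] [Finite G] (N M : Subgroup G)
    [N.Normal] [M.Normal] (habN : ∀ a b : ↥N, a * b = b * a)
    (habM : ∀ a b : ↥M, a * b = b * a) (hbot : N ≠ ⊥) (hNM : N < M)
    (hunr : UnramifiedOver G N) :
    UnramifiedOver G M ↔
      UnramifiedOver (G ⧸ N) (M.map (QuotientGroup.mk' N)) :=
  stmt_11_general N M habM hNM hunr
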